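/- Let G be a directed graph and let X and Y be nodes of G that are not adjacent in G, such that Y is not an ancestor of X and Y is not part of any directed cycle in G. Then any set of nodes Z with Pa_G(Y) ⊆ Z and Z ∩ Dec_G(Y) = ∅ (where Dec_G(Y) denotes the descendants of Y in G) both d-separates and σ-separates X from Y in G. -/

import Mathlib

open MeasureTheory ProbabilityTheory
open scoped Classical

/-! ## Directed graphs given by parent sets -/

/-- A directed graph on node set `ι`, given by a parent set `Pa i` for each node `i`;
there is an edge `j → i` whenever `j ∈ Pa i`. -/
structure DiGraph (ι : Type*) where
  Pa : ι → Set ι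

namespace DiGraph

variable {ι : Type*}

/-- `G.Edge j i` means there is a directed edge `j → i`. -/
def Edge (G : DiGraph ι) (j i : ι) : Prop := j ∈ G.Pa i

/-- Two nodes are adjacent if there is an edge between them in either direction. -/
def Adj (G : DiGraph ι) (i j : ι) : Prop := G.Edge i j ∨ G.Edge j i

/-- `G.Anc x y`: `x` is an ancestor of `y` (each node is its own ancestor). -/
def Anc (G : DiGraph ι) (x y : ι) : Prop := Relation.ReflTransGen G.Edge x y

/-- The descendants of `y`. -/
def Dec (G : DiGraph ι) (y : ι) : Set ι := {z | G.Anc y z}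

/-- `x` is part of a directed cycle (a directed path of positive length from `x` to `x`). -/
def InCycle (G : DiGraph ι) (x : ι) : Prop := Relation.TransGen G.Edge x x

/-- A graph is acyclic if it has no directed cycles. -/
def Acyclic (G : DiGraph ι) : Prop := ∀ x, ¬ G.InCycle x

/-- `p` is a path (irrespective of edge orientation) between `x` and `y`. -/
def IsPathList (G : DiGraph ι) (x y : ι) (p : List ι) : Prop :=
  List.Chain' G.Adj p ∧ p.head? = some x ∧ p.getLast? = some y

/-- `a, w, b` occur consecutively in the list `p`. -/
def TripleIn (p : List ι) (a w b : ι) : Prop := ∃ l r, p = l ++ a :: w :: b :: r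

/-- `w` is a collider between `a` and `b`: both path edges point into `w`. -/
def Collider (G : DiGraph ι) (a w b : ι) : Prop := G.Edge a w ∧ G.Edge b w

/-- `Z` blocks the path `p`: it contains a non-collider of `p`, or `p` has a collider
such that neither it nor any of its descendants belongs to `Z`. -/
def BlocksPath (G : DiGraph ι) (Z : Set ι) (p : List ι) : Prop :=
  (∃ a w b, TripleIn p a w b ∧ ¬ G.Collider a w b ∧ w ∈ Z) ∨
  (∃ a w b, TripleIn p a w b ∧ G.Collider a w b ∧ ∀ d ∈ G.Dec w, d ∉ Z)

/-- `Z` d-separates `x` and `y` in `G` if it blocks every path between them. -/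
def DSep (G : DiGraph ι) (x y : ι) (Z : Set ι) : Prop :=
  ∀ p, G.IsPathList x y p → G.BlocksPath Z p

/-- Two nodes lie in the same strongly connected component. -/
def SameSCC (G : DiGraph ι) (x y : ι) : Prop := G.Anc x y ∧ G.Anc y x

/-- σ-blocking of a path. -/
def SigmaBlocksPath (G : DiGraph ι) (Z : Set ι) (p : List ι) : Prop :=
  (∃ a w b, TripleIn p a w b ∧ G.Collider a w b ∧ ∀ d ∈ G.Dec w, d ∉ Z) ∨
  (∃ a w b, TripleIn p a w b ∧ ¬ G.Collider a w b ∧ w ∈ Z ∧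
    ((G.Edge w a ∧ ¬ G.SameSCC w a) ∨ (G.Edge w b ∧ ¬ G.SameSCC w b)))

/-- `Z` σ-separates `x` and `y` in `G`. -/
def SigmaSep (G : DiGraph ι) (x y : ι) (Z : Set ι) : Prop :=
  ∀ p, G.IsPathList x y p → G.SigmaBlocksPath Z p

/-- The nonempty list `x :: xs` is a directed cycle of `G` (edges along the list,
plus an edge from the last element back to the first). -/
def IsCycleList (G : DiGraph ι) : List ι → Prop
  | [] => False
  | x :: xs => List.Chain G.Edge x xs ∧ G.Edge ((x :: xs).getLast (List.cons_ne_nil x xs)) x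

/-- A minimal directed cycle: a simple directed cycle such that no shorter simple directed
cycle runs within its node set. -/
def MinimalCycle (G : DiGraph ι) (p : List ι) : Prop :=
  G.IsCycleList p ∧ p.Nodup ∧
    ∀ q, G.IsCycleList q → q.Nodup → (∀ v ∈ q, v ∈ p) → p.length ≤ q.length

/-- All minimal directed cycles of `G` have length at most 2 (edge flips). -/
def SmallCycles (G : DiGraph ι) : Prop := ∀ p, G.MinimalCycle p → p.length ≤ 2

end DiGraph

/-! ## Support of a measure and conditional independence -/

/-- The support of a measure: the smallest closed set of full measure
(the intersection of all closed sets of full measure). -/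
def msupp {α : Type*} [MeasurableSpace α] [TopologicalSpace α]
    (P : MeasureTheory.Measure α) : Set α :=
  ⋂₀ {C : Set α | IsClosed C ∧ P Cᶜ = 0}

/-- Conditional independence of `f` and `g` given `h`, under the measure `μ`:
for all measurable sets `A`, `B`, the conditional expectation (given the σ-algebra
generated by `h`) of the product of indicators factorizes almost everywhere. -/
def CondIndepGiven {Ω α β γ : Type*} [MeasurableSpace Ω] [MeasurableSpace α]
    [MeasurableSpace β] [MeasurableSpace γ]
    (μ : MeasureTheory.Measure Ω) (f : Ω → α) (g : Ω → β) (h : Ω → γ) : Prop :=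
  ∀ (A : Set α) (B : Set β), MeasurableSet A → MeasurableSet B →
    (MeasureTheory.condExp (MeasurableSpace.comap h inferInstance) μ
        (fun ω => (f ⁻¹' A).indicator (fun _ => (1 : ℝ)) ω
                * (g ⁻¹' B).indicator (fun _ => (1 : ℝ)) ω))
      =ᵐ[μ]
    (fun ω => MeasureTheory.condExp (MeasurableSpace.comap h inferInstance) μ
        ((f ⁻¹' A).indicator (fun _ => (1 : ℝ))) ω
      * MeasureTheory.condExp (MeasurableSpace.comap h inferInstance) μ
        ((g ⁻¹' B).indicator (fun _ => (1 : ℝ))) ω)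

/-! ## Structural equations and SCMs -/

/-- A set of structural equations over the index set `ι`: a parent set `Pa i` for each `i`
together with mechanisms `f i`, where `f i` only depends on the parent coordinates. -/
structure StructEqs (ι : Type*) (val : ι → Type*) (noise : ι → Type*) where
  Pa : ι → Set ι
  f : ∀ i, (∀ j, val j) → noise i → val i
  localized : ∀ i x x' e, (∀ j ∈ Pa i, x j = x' j) → f i x e = f i x' e

namespace StructEqs

variable {ι : Type*} {val : ι → Type*} {noise : ι → Type*}

/-- The mechanism graph `G[F]` of a set of structural equations. -/
def mechGraph (F : StructEqs ι val noise) : DiGraph ι := ⟨F.Pa⟩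

variable [DecidableEq ι]

/-- The hard intervention `do(R = r)`: the structural equation of `R` is replaced by the
constant `r`, and `R = r` is substituted into all other mechanisms. -/
def doIntv (F : StructEqs ι val noise) (R : ι) (r : val R) : StructEqs ι val noise where
  Pa i := if i = R then ∅ else F.Pa i \ {R}
  f i x e := if h : i = R then cast (congrArg val h).symm r
             else F.f i (Function.update x R r) e
  localized := by
    intro i x x' e hx
    by_cases h : i = R
    · simp [h]
    · simp only [dif_neg h]
      refine F.localized i _ _ e ?_
      intro j hj
      by_cases hjR : j = R
      · subst hjR; simp
      · rw [Function.update_of_ne hjR, Function.update_of_ne hjR]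
        refine hx j ?_
        simp only [if_neg h, Set.mem_diff, Set.mem_singleton_iff]
        exact ⟨hj, hjR⟩

end StructEqs

/-- A structural causal model: structural equations `F`, a probability space `(Ω, μ)`,
measurable noise variables `η` and observed variables `X` solving the equations. -/
structure SCM (ι : Type*) (val : ι → Type*) (noise : ι → Type*) (Ω : Type*)
    [∀ i, MeasurableSpace (val i)] [∀ i, MeasurableSpace (noise i)]
    [MeasurableSpace Ω] where
  F : StructEqs ι val noise
  μ : MeasureTheory.Measure Ω
  prob : MeasureTheory.IsProbabilityMeasure μ
  η : ∀ i, Ω → noise i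
  X : ∀ i, Ω → val i
  meas_η : ∀ i, Measurable (η i)
  meas_X : ∀ i, Measurable (X i)
  solves : ∀ i ω, X i ω = F.f i (fun j => X j ω) (η i ω)

namespace SCM

variable {ι : Type*} {val : ι → Type*} {noise : ι → Type*} {Ω : Type*}
  [∀ i, MeasurableSpace (val i)] [∀ i, MeasurableSpace (noise i)] [MeasurableSpace Ω]

/-- The joint law `P_M` of the observed variables. -/
noncomputable def law (M : SCM ι val noise Ω) : MeasureTheory.Measure (∀ i, val i) :=
  M.μ.map (fun ω i => M.X i ω)

/-- The conditional measure given the event `R = r` (on the underlying space). -/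
noncomputable def condμ (M : SCM ι val noise Ω) (R : ι) (r : val R) :
    MeasureTheory.Measure Ω :=
  ProbabilityTheory.cond M.μ {ω | M.X R ω = r}

/-- The conditional law `P_M(· | R = r)` of the observed variables. -/
noncomputable def condLaw (M : SCM ι val noise Ω) (R : ι) (r : val R) :
    MeasureTheory.Measure (∀ i, val i) :=
  (M.condμ R r).map (fun ω i => M.X i ω)

/-- Conditional independence `X_x ⟂ X_y | (X_j)_{j ∈ Z}` under the measure `ν`. -/
def CI (M : SCM ι val noise Ω) (ν : MeasureTheory.Measure Ω) (x y : ι) (Z : Set ι) : Prop :=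
  CondIndepGiven ν (M.X x) (M.X y) (fun ω (j : Z) => M.X j ω)

/-- Faithfulness of the distribution `ν` of the model's variables to the graph `G`:
every conditional independence implies the corresponding d-separation. -/
def FaithfulTo (M : SCM ι val noise Ω) (ν : MeasureTheory.Measure Ω) (G : DiGraph ι) : Prop :=
  ∀ x y Z, M.CI ν x y Z → G.DSep x y Z

/-- Causal sufficiency: the exogenous noises are jointly independent. -/
def CausalSuff (M : SCM ι val noise Ω) : Prop :=
  ProbabilityTheory.iIndepFun M.η M.μ

/-- A solution of the intervened structural equations `F_{do(R=r)}` on the same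
probability space, driven by the same exogenous noises (potential responses). -/
structure IntvSol [DecidableEq ι] (M : SCM ι val noise Ω) (R : ι) (r : val R) where
  X : ∀ i, Ω → val i
  meas_X : ∀ i, Measurable (X i)
  solves : ∀ i ω, X i ω = (M.F.doIntv R r).f i (fun j => X j ω) (M.η i ω)

/-- The counterfactual law `P_{M_{do(R=r)}}`. -/
noncomputable def cfLaw [DecidableEq ι] (M : SCM ι val noise Ω) (R : ι) (r : val R)
    (sol : M.IntvSol R r) : MeasureTheory.Measure (∀ i, val i) :=
  M.μ.map (fun ω i => sol.X i ω)

end SCM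

/-! ## Observable graphs -/

/-- The observable graph `G[F, P]`: `j` is a parent of `i` iff `j ∈ Pa i` and the mechanism
`f i`, restricted to the support of the marginal of `P` on the parents of `i`, is not
constant in the `j`-th argument. -/
def obsGraph {ι : Type*} {val : ι → Type*} {noise : ι → Type*}
    [∀ i, MeasurableSpace (val i)] [∀ i, TopologicalSpace (val i)]
    (F : StructEqs ι val noise) (P : MeasureTheory.Measure (∀ i, val i)) : DiGraph ι where
  Pa i := {j | j ∈ F.Pa i ∧
    ¬ ∀ (e : noise i) (x x' : ∀ k, val k),
        (fun k : F.Pa i => x k) ∈ msupp (P.map fun z (k : F.Pa i) => z k) →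
        (fun k : F.Pa i => x' k) ∈ msupp (P.map fun z (k : F.Pa i) => z k) →
        (∀ k, k ≠ j → x k = x' k) →
        F.f i x e = F.f i x' e}

namespace SCM

variable {ι : Type*} {val : ι → Type*} {noise : ι → Type*} {Ω : Type*}
  [∀ i, MeasurableSpace (val i)] [∀ i, MeasurableSpace (noise i)] [MeasurableSpace Ω]
  [∀ i, TopologicalSpace (val i)]

/-- The union graph `G^union = G[F, P_M]`. -/
noncomputable def unionGraph (M : SCM ι val noise Ω) : DiGraph ι := obsGraph M.F M.law

variable [DecidableEq ι]

/-- The physical graph `G^phys_{R=r} = G[F_{do(R=r)}, P_M]`. -/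
noncomputable def physGraph (M : SCM ι val noise Ω) (R : ι) (r : val R) : DiGraph ι :=
  obsGraph (M.F.doIntv R r) M.law

/-- The barred descriptive graph `Ḡ^descr_{R=r} = G[F_{do(R=r)}, P_M(·|R=r)]`. -/
noncomputable def descrBarGraph (M : SCM ι val noise Ω) (R : ι) (r : val R) : DiGraph ι :=
  obsGraph (M.F.doIntv R r) (M.condLaw R r)

/-- The descriptive graph `G^descr_{R=r}`: the barred descriptive graph together with all
edges of the union graph involving `R`. -/
noncomputable def descrGraph (M : SCM ι val noise Ω) (R : ι) (r : val R) : DiGraph ι :=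
  ⟨fun i => (M.descrBarGraph R r).Pa i ∪ {j | (j = R ∨ i = R) ∧ j ∈ (M.unionGraph).Pa i}⟩

/-- The counterfactual graph `G^CF_{R=r} = G[F_{do(R=r)}, P_{M_{do(R=r)}}]`. -/
noncomputable def cfGraph (M : SCM ι val noise Ω) (R : ι) (r : val R)
    (sol : M.IntvSol R r) : DiGraph ι :=
  obsGraph (M.F.doIntv R r) (M.cfLaw R r sol)

/-- Weak context-acyclicity: every descriptive graph is acyclic. -/
def WeakCtxAcyclic (M : SCM ι val noise Ω) (R : ι) : Prop :=
  ∀ r : val R, (M.descrGraph R r).Acyclic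

/-- Strong context-acyclicity: weak context-acyclicity, and no directed cycle of the
union graph contains any ancestor of `R` (including `R` itself). -/
def StrongCtxAcyclic (M : SCM ι val noise Ω) (R : ι) : Prop :=
  (∀ r : val R, (M.descrGraph R r).Acyclic) ∧
  ∀ x, (M.unionGraph).Anc x R → ¬ (M.unionGraph).InCycle x

/-- Single-graph-sufficiency: descriptive, physical and counterfactual graphs agree. -/
def SingleGraphSuff (M : SCM ι val noise Ω) (R : ι)
    (sols : ∀ r : val R, M.IntvSol R r) : Prop :=
  ∀ r : val R, M.descrGraph R r = M.physGraph R r ∧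
    M.physGraph R r = M.cfGraph R r (sols r)

/-- Weak context-sufficiency: for every `Y` that is not a union-child of `R` the
descriptive parents agree with the union parents. -/
def WeakCtxSuff (M : SCM ι val noise Ω) (R : ι) : Prop :=
  ∀ Y, R ∉ (M.unionGraph).Pa Y → ∀ r : val R,
    (M.descrGraph R r).Pa Y = (M.unionGraph).Pa Y

/-- `r`-faithfulness: `P_M` is faithful to `G^descr_{R=r}` and `P_M(·|R=r)` is faithful
to `Ḡ^descr_{R=r}`. -/
def rFaithful (M : SCM ι val noise Ω) (R : ι) (r : val R) : Prop :=
  M.FaithfulTo M.μ (M.descrGraph R r) ∧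
  M.FaithfulTo (M.condμ R r) (M.descrBarGraph R r)

/-- The oracle of the adaptive algorithm: if `R ∈ S` it reports the context-specific
conditional independence `X_i ⟂ X_j | S ∖ {R}, R = r`; otherwise the pooled
conditional independence `X_i ⟂ X_j | S` under `P_M`. -/
def oracleIndep (M : SCM ι val noise Ω) (R : ι) (r : val R) (i j : ι) (S : Set ι) : Prop :=
  (R ∈ S ∧ M.CI (M.condμ R r) i j (S \ {R})) ∨ (R ∉ S ∧ M.CI M.μ i j S)

/-- One step of the (oracle) adaptive skeleton algorithm: remove a currently present edge
`i − j` for which some subset `S` of the current adjacencies of `j` (excluding `i`)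
is reported as a separating set by the oracle. -/
def AlgStep (M : SCM ι val noise Ω) (R : ι) (r : val R) (A A' : ι → ι → Prop) : Prop :=
  ∃ i j, ∃ S : Set ι, A i j ∧ (∀ k ∈ S, A j k) ∧ i ∉ S ∧ M.oracleIndep R r i j S ∧
    A' = fun a b => A a b ∧ ¬ ((a = i ∧ b = j) ∨ (a = j ∧ b = i))

/-- `A` is an output of the oracle adaptive skeleton algorithm: it is reachable from the
complete graph by edge removals and no further removal is possible. -/
def AlgOutput (M : SCM ι val noise Ω) (R : ι) (r : val R) (A : ι → ι → Prop) : Prop :=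
  Relation.ReflTransGen (M.AlgStep R r) (fun i j => i ≠ j) A ∧ ∀ A', ¬ M.AlgStep R r A A'

end SCM

/-! Walk along the path from `Y` towards `X`. If its first edge is `w → Y`, then `w` is a
parent of `Y`, hence in `Z`, and since `Y` lies on no cycle that edge leaves the strongly
connected component of `w`. If it is `Y → w`, the path starts out along a directed path of
descendants of `Y`; as `X` is not a descendant of `Y`, some edge turns back, creating a
collider below `Y`, none of whose descendants lies in `Z`. -/

namespace DiGraph

variable {ι : Type*} {G : DiGraph ι}

lemma Adj.symm {i j : ι} (h : G.Adj i j) : G.Adj j i := Or.symm h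

lemma Collider.symm {a w b : ι} (h : G.Collider a w b) : G.Collider b w a := And.symm h

lemma TripleIn.cons {p : List ι} {a w b : ι} (x : ι) (h : TripleIn p a w b) :
    TripleIn (x :: p) a w b := by
  obtain ⟨l, r, rfl⟩ := h
  exact ⟨x :: l, r, rfl⟩

lemma TripleIn.reverse {p : List ι} {a w b : ι} (h : TripleIn p a w b) :
    TripleIn p.reverse b w a := by
  obtain ⟨l, r, rfl⟩ := h
  exact ⟨r.reverse, l.reverse, by simp⟩

lemma IsPathList.reverse {x y : ι} {p : List ι} (h : G.IsPathList x y p) :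
    G.IsPathList y x p.reverse := by
  obtain ⟨hchain, hhead, hlast⟩ := h
  refine ⟨?_, by rwa [List.head?_reverse], by rwa [List.getLast?_reverse]⟩
  exact List.isChain_reverse.mpr (hchain.imp fun _ _ h => h.symm)

lemma BlocksPath.reverse {Z : Set ι} {p : List ι} (h : G.BlocksPath Z p) :
    G.BlocksPath Z p.reverse := by
  rcases h with ⟨a, w, b, hp, hc, hw⟩ | ⟨a, w, b, hp, hc, hw⟩
  · exact .inl ⟨b, w, a, hp.reverse, fun h => hc h.symm, hw⟩
  · exact .inr ⟨b, w, a, hp.reverse, hc.symm, hw⟩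

lemma SigmaBlocksPath.reverse {Z : Set ι} {p : List ι} (h : G.SigmaBlocksPath Z p) :
    G.SigmaBlocksPath Z p.reverse := by
  rcases h with ⟨a, w, b, hp, hc, hw⟩ | ⟨a, w, b, hp, hc, hw, hout⟩
  · exact .inl ⟨b, w, a, hp.reverse, hc.symm, hw⟩
  · exact .inr ⟨b, w, a, hp.reverse, fun h => hc h.symm, hw, hout.symm⟩

lemma DSep.symm {x y : ι} {Z : Set ι} (h : G.DSep x y Z) : G.DSep y x Z := fun p hp => by
  simpa using (h _ hp.reverse).reverse

lemma SigmaSep.symm {x y : ι} {Z : Set ι} (h : G.SigmaSep x y Z) : G.SigmaSep y x Z :=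
  fun p hp => by simpa using (h _ hp.reverse).reverse

lemma exists_collider_of_edge_of_not_anc {a w x : ι} {t : List ι}
    (hchain : List.IsChain G.Adj (a :: w :: t)) (haw : G.Edge a w)
    (hlast : (w :: t).getLast? = some x) (hx : ¬ G.Anc w x) :
    ∃ a' c b, TripleIn (a :: w :: t) a' c b ∧ G.Collider a' c b ∧ G.Anc w c := by
  induction t generalizing a w with
  | nil => exact (hx (Option.some.inj (by simpa using hlast) ▸ .refl)).elim
  | cons u t ih =>
    have hchain' := (List.isChain_cons_cons.mp hchain).2
    rcases (List.isChain_cons_cons.mp hchain').1 with hwu | huw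
    · obtain ⟨a', c, b, hp, hc, huc⟩ :=
        ih hchain' hwu (by simpa using hlast) fun hux => hx (.head hwu hux)
      exact ⟨a', c, b, hp.cons a, hc, .head hwu huc⟩
    · exact ⟨a, w, u, ⟨[], t, rfl⟩, ⟨haw, huw⟩, .refl⟩

lemma exists_collider_below_or_parent {x y : ι} {q : List ι} (hq : G.IsPathList y x q)
    (hnanc : ¬ G.Anc y x) (hnadj : ¬ G.Adj x y) :
    (∃ a c b, TripleIn q a c b ∧ G.Collider a c b ∧ G.Anc y c) ∨
      ∃ w b, TripleIn q y w b ∧ G.Edge w y := by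
  obtain ⟨hchain, hhead, hlast⟩ := hq
  obtain ⟨w, u, t, rfl⟩ : ∃ w u t, q = y :: w :: u :: t := by
    match q, hhead, hlast, hchain with
    | [_], rfl, hlast, _ => exact (hnanc (Option.some.inj (by simpa using hlast) ▸ .refl)).elim
    | [_, _], rfl, hlast, hchain =>
      simp only [List.getLast?_cons_cons, List.getLast?_singleton, Option.some.injEq] at hlast
      exact absurd (hlast ▸ (List.isChain_cons_cons.mp hchain).1.symm) hnadj
    | _ :: w :: u :: t, rfl, _, _ => exact ⟨w, u, t, rfl⟩
  rcases (List.isChain_cons_cons.mp hchain).1 with hyw | hwy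
  · obtain ⟨a, c, b, hp, hc, hwc⟩ := exists_collider_of_edge_of_not_anc hchain hyw
      (by simpa using hlast) fun hwx => hnanc (.head hyw hwx)
    exact .inl ⟨a, c, b, hp, hc, .head hyw hwc⟩
  · exact .inr ⟨w, u, ⟨[], t, rfl⟩, hwy⟩

end DiGraph

open DiGraph in
theorem path_blocking_general
    {ι : Type*} (G : DiGraph ι) (X Y : ι)
    (hnadj : ¬ G.Adj X Y) (hnanc : ¬ G.Anc Y X) (hncyc : ¬ G.InCycle Y)
    (Z : Set ι) (hPa : G.Pa Y ⊆ Z) (hDec : Z ∩ G.Dec Y = ∅) :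
    G.DSep X Y Z ∧ G.SigmaSep X Y Z := by
  have hbelow {c : ι} (hYc : G.Anc Y c) : ∀ d ∈ G.Dec c, d ∉ Z := fun d hcd hdZ =>
    (Set.eq_empty_iff_forall_notMem.mp hDec) d ⟨hdZ, hYc.trans hcd⟩
  have hparent {w b : ι} (hwY : G.Edge w Y) : ¬ G.Collider Y w b :=
    fun hc => hbelow .refl w (.single hc.1) (hPa hwY)
  have hleaves {w : ι} (hwY : G.Edge w Y) : ¬ G.SameSCC w Y :=
    fun hscc => hncyc (.tail' hscc.2 hwY)
  refine ⟨DSep.symm fun q hq => ?_, SigmaSep.symm fun q hq => ?_⟩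
  · rcases exists_collider_below_or_parent hq hnanc hnadj with
      ⟨a, c, b, hp, hc, hYc⟩ | ⟨w, b, hp, hwY⟩
    · exact .inr ⟨a, c, b, hp, hc, hbelow hYc⟩
    · exact .inl ⟨Y, w, b, hp, hparent hwY, hPa hwY⟩
  · rcases exists_collider_below_or_parent hq hnanc hnadj with
      ⟨a, c, b, hp, hc, hYc⟩ | ⟨w, b, hp, hwY⟩
    · exact .inl ⟨a, c, b, hp, hc, hbelow hYc⟩
    · exact .inr ⟨Y, w, b, hp, hparent hwY, hPa hwY, .inl ⟨hwY, hleaves hwY⟩⟩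

/-- **Path blocking, Lemma 6.**
If `X` and `Y` are non-adjacent in `G`, `Y` is not an ancestor of `X` and `Y` is not
part of any directed cycle, then any `Z` with `Pa_G(Y) ⊆ Z` and `Z ∩ Dec_G(Y) = ∅`
both d-separates and σ-separates `X` from `Y` in `G`. -/
theorem path_blocking
    {ι : Type*} [Fintype ι] (G : DiGraph ι) (X Y : ι)
    (hnadj : ¬ G.Adj X Y) (hnanc : ¬ G.Anc Y X) (hncyc : ¬ G.InCycle Y)
    (Z : Set ι) (hPa : G.Pa Y ⊆ Z) (hDec : Z ∩ G.Dec Y = ∅) :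
    G.DSep X Y Z ∧ G.SigmaSep X Y Z :=
  path_blocking_general G X Y hnadj hnanc hncyc Z hPa hDec
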